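/- arXiv:2308.06520 — 2 statements merged into one kernel-verified Lean document; each statement's English description precedes it below -/
import Mathlib

section
/- Let M be a matroid and V' ⊆ V with ρ* = max_{U ⊆ V'} ρ_M(U) < +∞. If W_1 and W_2 are two subsets of V' each of density ρ*, then ρ_M(W_1 ∪ W_2) = ρ*. In particular, the densest subsets of V' are closed under union, and there is a unique maximum-cardinality densest subset. -/
open Set ENNReal

namespace Paper

variable {α : Type*}

/-- The rank (in `ℕ∞`) of a set `X` with respect to an independence predicate `Indep`:
the supremum of the cardinalities of independent subsets of `X`. -/
noncomputable def rkP (Indep : Set α → Prop) (X : Set α) : ℕ∞ :=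
  ⨆ I ∈ {I | Indep I ∧ I ⊆ X}, I.encard

/-- The rank of a set in a matroid. -/
noncomputable def rk (M : Matroid α) (X : Set α) : ℕ∞ := rkP M.Indep X

/-- Independence in the contraction `M/A`. -/
def CIndep (M : Matroid α) (A S : Set α) : Prop :=
  S ⊆ M.E \ A ∧ ∃ B, M.IsBasis' B A ∧ M.Indep (S ∪ B)

/-- The rank of a set in the contraction `M/A`. -/
noncomputable def crk (M : Matroid α) (A X : Set α) : ℕ∞ := rkP (CIndep M A) X

/-- The density `|X| / rank X` of a set `X` (with respect to an independence
predicate), valued in `ℝ≥0∞`; the empty set has density `0` and a nonempty set of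
rank `0` has density `∞`. -/
noncomputable def densP (Indep : Set α → Prop) (X : Set α) : ℝ≥0∞ :=
  (X.encard : ℝ≥0∞) / (rkP Indep X : ℝ≥0∞)

/-- The density of a set in a matroid. -/
noncomputable def dens (M : Matroid α) (X : Set α) : ℝ≥0∞ := densP M.Indep X

/-- A `ρ`-Density-Balanced-Subset with respect to an independence predicate. -/
def IsDBSP (Indep : Set α → Prop) (ρ : ℕ) (V' : Set α) : Prop :=
  densP Indep V' = ρ ∧ ∀ U ⊆ V', densP Indep U ≤ ρ

/-- A `ρ`-DBS in a matroid `M`. -/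
def IsDBS (M : Matroid α) (ρ : ℕ) (V' : Set α) : Prop :=
  V' ⊆ M.E ∧ IsDBSP M.Indep ρ V'

/-- Independence in the `ρ`-fold matroid union `ρM`: the set can be partitioned
into `ρ` independent sets of `M`. -/
def UnionIndep (M : Matroid α) (ρ : ℕ) (S : Set α) : Prop :=
  ∃ B : Fin ρ → Set α, (∀ i, M.Indep (B i)) ∧
    Pairwise (Function.onFun Disjoint B) ∧ S = ⋃ i, B i

end Paper

namespace Paper

section Aux
set_option linter.unusedSectionVars false
set_option linter.unusedVariables false

variable {α : Type*}

lemma rk_le_of_forall {M : Matroid α} {X : Set α} {c : ℕ∞}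
    (h : ∀ I, M.Indep I → I ⊆ X → I.encard ≤ c) : rk M X ≤ c :=
  iSup₂_le fun I hI => h I hI.1 hI.2

lemma le_rk {M : Matroid α} {X I : Set α} (hI : M.Indep I) (hIX : I ⊆ X) :
    I.encard ≤ rk M X :=
  le_iSup₂ (f := fun I (_ : I ∈ {I | M.Indep I ∧ I ⊆ X}) => I.encard) I ⟨hI, hIX⟩

lemma rk_eq_of_basis' {M : Matroid α} {X I : Set α} (hI : M.IsBasis' I X) :
    rk M X = I.encard := by
  refine le_antisymm (rk_le_of_forall fun J hJ hJX => ?_)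
    (le_rk hI.indep hI.subset)
  obtain ⟨J', hJ', hJJ'⟩ := hJ.subset_isBasis'_of_subset hJX
  calc J.encard ≤ J'.encard := encard_mono hJJ'
    _ = I.encard := Matroid.IsBase.encard_eq_encard_of_isBase
        (Matroid.isBase_restrict_iff'.2 hJ') (Matroid.isBase_restrict_iff'.2 hI)

lemma rk_le_encard (M : Matroid α) (X : Set α) : rk M X ≤ X.encard :=
  rk_le_of_forall fun _ _ h => encard_mono h

lemma rk_submod (M : Matroid α) (X Y : Set α) :
    rk M (X ∪ Y) + rk M (X ∩ Y) ≤ rk M X + rk M Y := by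
  obtain ⟨I, hI⟩ := M.exists_isBasis' (X ∩ Y)
  obtain ⟨J, hJ, hIJ⟩ := hI.indep.subset_isBasis'_of_subset
    (hI.subset.trans (inter_subset_left.trans subset_union_left))
  rw [rk_eq_of_basis' hI, rk_eq_of_basis' hJ]
  have h1 : (J ∩ X).encard ≤ rk M X :=
    le_rk (hJ.indep.subset inter_subset_left) inter_subset_right
  have h2 : (J ∩ Y).encard ≤ rk M Y :=
    le_rk (hJ.indep.subset inter_subset_left) inter_subset_right
  have hmod : J.encard + I.encard ≤ (J ∩ X).encard + (J ∩ Y).encard := by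
    have e1 : (J ∩ X) ∪ (J ∩ Y) = J := by
      rw [← inter_union_distrib_left, inter_eq_self_of_subset_left hJ.subset]
    have e2 : (J ∩ X) ∩ (J ∩ Y) = J ∩ (X ∩ Y) := by ext x; simp; tauto
    have := encard_union_add_encard_inter (J ∩ X) (J ∩ Y)
    rw [e1, e2] at this
    rw [← this]
    exact add_le_add_right (encard_mono (subset_inter hIJ hI.subset)) _
  calc J.encard + I.encard ≤ (J ∩ X).encard + (J ∩ Y).encard := hmod
    _ ≤ rk M X + rk M Y := add_le_add h1 h2

variable {M : Matroid α} [M.Finite] {V' : Set α} {ρstar : ℝ≥0∞}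

lemma encard_ne_top {X : Set α} (hX : X ⊆ M.E) : X.encard ≠ ⊤ :=
  (M.ground_finite.subset hX).encard_eq_coe_toFinset_card ▸ (by simp)

lemma rk_cast_ne_top {X : Set α} (hX : X ⊆ M.E) : ((rk M X : ℕ∞) : ℝ≥0∞) ≠ ⊤ := by
  have h := rk_le_encard M X
  have h2 : (rk M X : ℕ∞) ≠ ⊤ := fun ht => encard_ne_top hX (top_le_iff.1 (ht ▸ h))
  intro ht
  rw [← ENat.toENNReal_top] at ht
  exact h2 (by exact_mod_cast ht)

lemma rk_ne_zero {X : Set α} (hX : X ⊆ V') (hV' : V' ⊆ M.E)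
    (hub : ∀ U ⊆ V', dens M U ≤ ρstar) (hfin : ρstar ≠ ⊤) (hne : X.Nonempty) :
    ((rk M X : ℕ∞) : ℝ≥0∞) ≠ 0 := by
  intro h0
  have hd := hub X hX
  have hrk : rk M X = rkP M.Indep X := rfl
  rw [dens, densP, ← hrk, h0, ENNReal.div_zero] at hd
  · exact hfin (top_le_iff.1 hd)
  · intro h
    rw [← ENat.toENNReal_zero] at h
    exact hne.ne_empty (encard_eq_zero.1 (by exact_mod_cast h))

lemma le_mul_rk {X : Set α} (hX : X ⊆ V') (hV' : V' ⊆ M.E)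
    (hub : ∀ U ⊆ V', dens M U ≤ ρstar) (hfin : ρstar ≠ ⊤) :
    (X.encard : ℝ≥0∞) ≤ ρstar * ((rk M X : ℕ∞) : ℝ≥0∞) := by
  rcases X.eq_empty_or_nonempty with rfl | hne
  · simp
  · have h0 := rk_ne_zero hX hV' hub hfin hne
    have ht := rk_cast_ne_top (hX.trans hV')
    exact (ENNReal.div_le_iff h0 ht).1 (hub X hX)

lemma eq_mul_rk {X : Set α} (hX : X ⊆ V') (hV' : V' ⊆ M.E)
    (hub : ∀ U ⊆ V', dens M U ≤ ρstar) (hfin : ρstar ≠ ⊤) (hd : dens M X = ρstar) :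
    (X.encard : ℝ≥0∞) = ρstar * ((rk M X : ℕ∞) : ℝ≥0∞) := by
  rcases X.eq_empty_or_nonempty with rfl | hne
  · rw [← hd]; simp [dens, densP]
  · have h0 := rk_ne_zero hX hV' hub hfin hne
    have ht := rk_cast_ne_top (hX.trans hV')
    refine le_antisymm (le_mul_rk hX hV' hub hfin) ?_
    rw [dens, densP, show rkP M.Indep X = rk M X from rfl] at hd
    exact (ENNReal.le_div_iff_mul_le (Or.inl h0) (Or.inl ht)).1 hd.ge

lemma dens_union (hV' : V' ⊆ M.E)
    (hub : ∀ U ⊆ V', dens M U ≤ ρstar) (hfin : ρstar ≠ ⊤)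
    {W₁ W₂ : Set α} (h₁ : W₁ ⊆ V') (h₂ : W₂ ⊆ V')
    (hd₁ : dens M W₁ = ρstar) (hd₂ : dens M W₂ = ρstar) :
    dens M (W₁ ∪ W₂) = ρstar := by
  rcases (W₁ ∪ W₂).eq_empty_or_nonempty with he | hne
  · rw [union_empty_iff] at he
    rw [he.1] at hd₁
    rwa [he.1, he.2, union_empty]
  have hU : W₁ ∪ W₂ ⊆ V' := union_subset h₁ h₂
  refine le_antisymm (hub _ hU) ?_
  have h0 := rk_ne_zero hU hV' hub hfin hne
  have ht := rk_cast_ne_top (hU.trans hV')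
  rw [dens, densP, show rkP M.Indep (W₁ ∪ W₂) = rk M (W₁ ∪ W₂) from rfl,
    ENNReal.le_div_iff_mul_le (Or.inl h0) (Or.inl ht)]
  -- key inequality: ρ* * rk(∪) ≤ |∪|
  have hb : ((W₁ ∩ W₂).encard : ℝ≥0∞) ≠ ⊤ := by
    have h2 := encard_ne_top ((inter_subset_left.trans (h₁.trans hV')) : W₁ ∩ W₂ ⊆ M.E)
    intro h
    rw [← ENat.toENNReal_top] at h
    exact h2 (by exact_mod_cast h)
  have key : ρstar * ((rk M (W₁ ∪ W₂) : ℕ∞) : ℝ≥0∞) + ((W₁ ∩ W₂).encard : ℝ≥0∞)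
      ≤ ((W₁ ∪ W₂).encard : ℝ≥0∞) + ((W₁ ∩ W₂).encard : ℝ≥0∞) := by
    have hsub : ((rk M (W₁ ∪ W₂) : ℕ∞) : ℝ≥0∞) + ((rk M (W₁ ∩ W₂) : ℕ∞) : ℝ≥0∞)
        ≤ ((rk M W₁ : ℕ∞) : ℝ≥0∞) + ((rk M W₂ : ℕ∞) : ℝ≥0∞) := by
      have := rk_submod M W₁ W₂
      exact_mod_cast (by exact_mod_cast this : ((rk M (W₁ ∪ W₂) + rk M (W₁ ∩ W₂) : ℕ∞) : ℝ≥0∞) ≤ ((rk M W₁ + rk M W₂ : ℕ∞) : ℝ≥0∞))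
    calc ρstar * ((rk M (W₁ ∪ W₂) : ℕ∞) : ℝ≥0∞) + ((W₁ ∩ W₂).encard : ℝ≥0∞)
        ≤ ρstar * ((rk M (W₁ ∪ W₂) : ℕ∞) : ℝ≥0∞) + ρstar * ((rk M (W₁ ∩ W₂) : ℕ∞) : ℝ≥0∞) :=
          add_le_add_right (le_mul_rk (inter_subset_left.trans h₁) hV' hub hfin) _
      _ = ρstar * (((rk M (W₁ ∪ W₂) : ℕ∞) : ℝ≥0∞) + ((rk M (W₁ ∩ W₂) : ℕ∞) : ℝ≥0∞)) := by ring
      _ ≤ ρstar * (((rk M W₁ : ℕ∞) : ℝ≥0∞) + ((rk M W₂ : ℕ∞) : ℝ≥0∞)) :=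
          mul_le_mul_right hsub _
      _ = ρstar * ((rk M W₁ : ℕ∞) : ℝ≥0∞) + ρstar * ((rk M W₂ : ℕ∞) : ℝ≥0∞) := by ring
      _ = (W₁.encard : ℝ≥0∞) + (W₂.encard : ℝ≥0∞) := by
          rw [← eq_mul_rk h₁ hV' hub hfin hd₁, ← eq_mul_rk h₂ hV' hub hfin hd₂]
      _ = ((W₁ ∪ W₂).encard : ℝ≥0∞) + ((W₁ ∩ W₂).encard : ℝ≥0∞) := by
          have := encard_union_add_encard_inter W₁ W₂
          exact_mod_cast congrArg (fun x : ℕ∞ => (x : ℝ≥0∞)) this.symm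
  exact (WithTop.add_le_add_iff_right hb).1 key


lemma dens_sUnion (hV' : V' ⊆ M.E)
    (hub : ∀ U ⊆ V', dens M U ≤ ρstar) (hfin : ρstar ≠ ⊤)
    {S : Set (Set α)} (hS : S.Finite) :
    (∀ W ∈ S, W ⊆ V' ∧ dens M W = ρstar) → S.Nonempty →
      ⋃₀ S ⊆ V' ∧ dens M (⋃₀ S) = ρstar := by
  refine hS.induction_on (s := S) (motive := fun S _ => (∀ W ∈ S, W ⊆ V' ∧ dens M W = ρstar) → S.Nonempty →
      ⋃₀ S ⊆ V' ∧ dens M (⋃₀ S) = ρstar)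
    (fun _ h => absurd rfl h.ne_empty) ?_
  intro a s ha hs ih hprop hne
  rcases s.eq_empty_or_nonempty with rfl | hsne
  · simpa using hprop a (mem_insert a ∅)
  · obtain ⟨hsub, hdens⟩ := ih (fun W hW => hprop W (mem_insert_of_mem a hW)) hsne
    obtain ⟨ha1, ha2⟩ := hprop a (mem_insert a s)
    rw [sUnion_insert]
    exact ⟨union_subset ha1 hsub, dens_union hV' hub hfin ha1 hsub ha2 hdens⟩

end Aux

/-- Densest subsets are closed under union: if `W₁, W₂ ⊆ V'` both
attain the finite maximum density `ρ*`, then so does `W₁ ∪ W₂`; in particular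
there is a unique maximum-cardinality densest subset (a densest subset containing
every densest subset). -/
theorem stmt6 {α : Type*} (M : Matroid α) [M.Finite] (V' : Set α) (hV' : V' ⊆ M.E)
    (ρstar : ℝ≥0∞) (hub : ∀ U ⊆ V', dens M U ≤ ρstar) (hfin : ρstar ≠ ⊤)
    (W₁ W₂ : Set α) (h₁ : W₁ ⊆ V') (h₂ : W₂ ⊆ V')
    (hd₁ : dens M W₁ = ρstar) (hd₂ : dens M W₂ = ρstar) :
    dens M (W₁ ∪ W₂) = ρstar ∧
      ∃ A ⊆ V', dens M A = ρstar ∧ ∀ W ⊆ V', dens M W = ρstar → W ⊆ A := by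
  refine ⟨dens_union hV' hub hfin h₁ h₂ hd₁ hd₂, ?_⟩
  set S : Set (Set α) := {W | W ⊆ V' ∧ dens M W = ρstar} with hS
  have hSfin : S.Finite :=
    ((M.ground_finite.subset hV').finite_subsets).subset fun W hW => hW.1
  have hSne : S.Nonempty := ⟨W₁, h₁, hd₁⟩
  obtain ⟨hsub, hdens⟩ := dens_sUnion hV' hub hfin hSfin (fun W hW => hW) hSne
  exact ⟨⋃₀ S, hsub, hdens, fun W hWV hWd => subset_sUnion_of_mem ⟨hWV, hWd⟩⟩

end Paper
end

section
/- Let M be a matroid and V' ⊆ V a nonempty set of finite maximum density, and let A be the largest (maximum cardinality) densest subset of V'. Then for any nonempty B ⊆ V' \ A, the density of B in the contracted matroid M/A satisfies ρ_{M/A}(B) < ρ_M(A). -/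
open Set ENNReal

namespace Paper

lemma encard_le_rkP {Indep : Set α → Prop} {I X : Set α} (hI : Indep I) (hIX : I ⊆ X) :
    I.encard ≤ rkP Indep X :=
  le_iSup₂ (f := fun (I : Set α) (_ : I ∈ {I | Indep I ∧ I ⊆ X}) => I.encard) I ⟨hI, hIX⟩

lemma rkP_le {Indep : Set α → Prop} (X : Set α) : rkP Indep X ≤ X.encard :=
  iSup₂_le fun _ hI => encard_mono hI.2

lemma rkP_basis' {M : Matroid α} {J X : Set α} (hJ : M.IsBasis' J X) :
    rkP M.Indep X = J.encard := by
  refine le_antisymm (iSup₂_le fun I hI => ?_) (encard_le_rkP hJ.indep hJ.subset)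
  obtain ⟨J', hJ', hIJ'⟩ := hI.1.subset_isBasis'_of_subset hI.2
  rw [← hJ'.encard_eq_encard hJ]
  exact encard_mono hIJ'

/-- Key rank identity: `rk A + rk_{M/A} B = rk (A ∪ B)` for `B ⊆ M.E \ A`. -/
lemma rkP_add_crk {M : Matroid α} [M.Finite] {A B : Set α} (hBE : B ⊆ M.E \ A) :
    rkP M.Indep A + crk M A B = rkP M.Indep (A ∪ B) := by
  obtain ⟨BA, hBA⟩ := M.exists_isBasis' A
  obtain ⟨J, hJ, hBAJ⟩ := hBA.indep.subset_isBasis'_of_subset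
    (hBA.subset.trans subset_union_left)
  have hrA : rkP M.Indep A = BA.encard := rkP_basis' hBA
  have hr : rkP M.Indep (A ∪ B) = J.encard := rkP_basis' hJ
  have hBAfin : BA.Finite := M.ground_finite.subset hBA.indep.subset_ground
  have hBAtop : BA.encard ≠ ⊤ := hBAfin.encard_lt_top.ne
  -- the set `J \ BA` is contained in `B`
  have hSB : J \ BA ⊆ B := by
    rintro x ⟨hxJ, hxBA⟩
    rcases hJ.subset hxJ with hxA | hxB
    · exact absurd (hJ.indep.subset (insert_subset hxJ hBAJ))
        (hBA.insert_not_indep ⟨hxA, hxBA⟩)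
    · exact hxB
  have hCS : CIndep M A (J \ BA) := by
    refine ⟨hSB.trans hBE, BA, hBA, ?_⟩
    rw [diff_union_of_subset hBAJ]
    exact hJ.indep
  refine le_antisymm ?_ ?_
  · -- crk ≤ J.encard - BA.encard
    have hle : crk M A B ≤ J.encard - BA.encard := by
      refine iSup₂_le fun S hS => ?_
      obtain ⟨⟨hSE, B', hB', hind⟩, hSB'⟩ := hS
      have hdisj : Disjoint S B' := by
        refine disjoint_left.2 fun x hxS hxB' => (hSE hxS).2 (hB'.subset hxB')
      have hsub : S ∪ B' ⊆ A ∪ B := union_subset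
        (hSB'.trans subset_union_right) (hB'.subset.trans subset_union_left)
      have h1 : S.encard + B'.encard ≤ J.encard := by
        rw [← encard_union_eq hdisj, ← hr]
        exact encard_le_rkP hind hsub
      rw [hB'.encard_eq_encard hBA] at h1
      exact (ENat.addLECancellable_of_ne_top hBAtop).le_tsub_of_add_le_right h1
    calc rkP M.Indep A + crk M A B ≤ BA.encard + (J.encard - BA.encard) := by
          rw [hrA]; exact add_le_add le_rfl hle
      _ = J.encard := add_tsub_cancel_of_le (encard_mono hBAJ)
      _ = rkP M.Indep (A ∪ B) := hr.symm
  · rw [hrA, hr, ← encard_diff_add_encard_of_subset hBAJ, add_comm]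
    exact add_le_add le_rfl
      (le_iSup₂ (f := fun (S : Set α) (_ : S ∈ {S | CIndep M A S ∧ S ⊆ B}) => S.encard)
        (J \ BA) ⟨hCS, hSB⟩)

/-- Let `A` be the largest densest subset of `V'` (it contains
every densest subset). Then for any nonempty `B ⊆ V' \ A`, the density of `B` in
the contraction `M/A` is strictly smaller than `ρ_M(A)`. -/
theorem stmt7 {α : Type*} (M : Matroid α) [M.Finite] (V' : Set α)
    (hV' : V' ⊆ M.E) (hne : V'.Nonempty) (ρstar : ℝ≥0∞)
    (hub : ∀ U ⊆ V', dens M U ≤ ρstar) (hfin : ρstar ≠ ⊤)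
    (A : Set α) (hAV : A ⊆ V') (hAd : dens M A = ρstar)
    (hmax : ∀ W ⊆ V', dens M W = ρstar → W ⊆ A) :
    ∀ B ⊆ V' \ A, B.Nonempty → densP (CIndep M A) B < dens M A := by
  intro B hB hBne
  have hBE : B ⊆ M.E \ A := fun x hx => ⟨hV' (hB hx).1, (hB hx).2⟩
  have hdisj : Disjoint A B := disjoint_left.2 fun x hxA hxB => (hB hxB).2 hxA
  have hABV' : A ∪ B ⊆ V' := union_subset hAV fun x hx => (hB hx).1
  have hkey : rkP M.Indep A + crk M A B = rkP M.Indep (A ∪ B) := rkP_add_crk hBE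
  -- strict density bound for A ∪ B
  have hlt : dens M (A ∪ B) < ρstar := by
    refine lt_of_le_of_ne (hub _ hABV') fun h => ?_
    obtain ⟨x, hx⟩ := hBne
    exact (hB hx).2 (hmax _ hABV' h (mem_union_right _ hx))
  -- abbreviations
  set a : ℕ∞ := A.encard with ha_def
  set b : ℕ∞ := B.encard with hb_def
  set rA : ℕ∞ := rkP M.Indep A with hrA_def
  set rB : ℕ∞ := crk M A B with hrB_def
  have hafin : a ≠ ⊤ := (M.ground_finite.subset (hAV.trans hV')).encard_lt_top.ne
  have hbfin : b ≠ ⊤ := (M.ground_finite.subset fun x hx => (hBE hx).1).encard_lt_top.ne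
  have hrAfin : rA ≠ ⊤ := fun h => hafin (top_le_iff.1 (h ▸ rkP_le A))
  have hrBfin : rB ≠ ⊤ := fun h => hbfin (top_le_iff.1 (h ▸ rkP_le (Indep := CIndep M A) B))
  have hb0 : b ≠ 0 := by simpa [hb_def, encard_eq_zero] using hBne.ne_empty
  have castne : ∀ {x : ℕ∞}, x ≠ ⊤ → (x : ℝ≥0∞) ≠ ⊤ := by
    intro x hx h
    rw [← ENat.toENNReal_top] at h
    exact hx (ENat.toENNReal_inj.1 h)
  have hρ0 : ρstar ≠ 0 := fun h => by simp [h] at hlt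
  have hAB : (A ∪ B).encard = a + b := encard_union_eq hdisj
  have hlt' : (a : ℝ≥0∞) + b < ρstar * ((rA : ℝ≥0∞) + rB) := by
    have h1 : dens M (A ∪ B) = ((a : ℝ≥0∞) + b) / ((rA : ℝ≥0∞) + rB) := by
      rw [dens, densP, hAB, ← hkey]
      push_cast
      rfl
    rw [h1] at hlt
    rcases eq_or_ne ((rA : ℝ≥0∞) + rB) 0 with h0 | h0
    · rw [h0, ENNReal.div_zero
        (fun h => hb0 (by exact_mod_cast (add_eq_zero.1 h).2))] at hlt
      exact absurd hlt not_top_lt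
    · rwa [ENNReal.div_lt_iff (Or.inl h0)
        (Or.inl (ENNReal.add_ne_top.2 ⟨castne hrAfin, castne hrBfin⟩))] at hlt
  have hrA0 : (rA : ℝ≥0∞) ≠ 0 := by
    intro h
    rw [dens, densP, ← ha_def, ← hrA_def, h] at hAd
    rcases eq_or_ne (a : ℝ≥0∞) 0 with h2 | h2
    · rw [h2, ENNReal.zero_div] at hAd; exact hρ0 hAd.symm
    · rw [ENNReal.div_zero h2] at hAd; exact hfin hAd.symm
  have haeq : (a : ℝ≥0∞) = ρstar * rA := by
    have hd := hAd
    rw [dens, densP, ← ha_def, ← hrA_def] at hd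
    rw [← hd, ENNReal.div_mul_cancel hrA0 (castne hrAfin)]
  have hblt : (b : ℝ≥0∞) < ρstar * rB := by
    have h2 : ρstar * ↑rA + (b : ℝ≥0∞) < ρstar * ↑rA + ρstar * ↑rB := by
      rw [← mul_add, ← haeq]; exact hlt'
    exact (ENNReal.add_lt_add_iff_left
      (ENNReal.mul_ne_top hfin (castne hrAfin))).1 h2
  have hrB0 : (rB : ℝ≥0∞) ≠ 0 := by
    intro h
    rw [h, mul_zero] at hblt
    exact absurd hblt (by simp)
  have hgoal : densP (CIndep M A) B = (b : ℝ≥0∞) / (rB : ℝ≥0∞) := rfl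
  rw [hAd, hgoal]
  rwa [ENNReal.div_lt_iff (Or.inl hrB0) (Or.inl (castne hrBfin))]

end Paper
end
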